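/- Let G be a connected graph and G' the multigraph obtained by replacing each edge e by r parallel copies e_1,...,e_r with weights w(e_i) = i - 1. Then for any integer k, G has r spanning trees T_1,...,T_r with Σ_{1≤i<j≤r} |E(T_i) ∩ E(T_j)| ≤ k if and only if G' has r pairwise edge-disjoint spanning trees of total weight at most k. -/

import Mathlib

/-!
For an edge `e` of `G` let `m_e` be the number of trees of the family that contain it, so that
`∑_{i<j} |E(T_i) ∩ E(T_j)| = ∑_e C(m_e, 2)`. In `G'` the trees through copies of `e` must use
`m_e` distinct copies, whose weights are distinct naturals and so sum to at least `C(m_e, 2)`;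
projecting disjoint trees of `G'` to `G` therefore never increases the pair count beyond the
weight. Conversely, giving the `i`-th tree the copy of `e` numbered by how many earlier trees
contain `e` makes the trees disjoint, and the weight of the result is exactly the pair count.
-/

/-- `T` is the edge set of a spanning tree of the simple graph `G`. -/
def IsSpanningTreeEdgeSet {V : Type*} [Fintype V] [DecidableEq V]
    (G : SimpleGraph V) (T : Finset (Sym2 V)) : Prop :=
  ↑T ⊆ G.edgeSet ∧ (SimpleGraph.fromEdgeSet (↑T : Set (Sym2 V))).Connected ∧
    (SimpleGraph.fromEdgeSet (↑T : Set (Sym2 V))).IsAcyclic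

/-- A spanning tree of the multigraph obtained from `G` by replacing each edge
with `r` parallel copies. -/
def IsSpanningTreeOfCopies {V : Type*} [Fintype V] [DecidableEq V]
    (G : SimpleGraph V) (r : ℕ) (S : Finset (Sym2 V × Fin r)) : Prop :=
  (∀ e j j', (e, j) ∈ S → (e, j') ∈ S → j = j') ∧
    IsSpanningTreeEdgeSet G (S.image Prod.fst)

open Finset Function

theorem Finset.choose_card_two_le_sum {α : Type*} {s : Finset α} {f : α → ℕ}
    (hf : Set.InjOn f s) : (#s).choose 2 ≤ ∑ x ∈ s, f x := by
  have h := sum_range_le_sum (s := (s.image f).map Nat.castEmbedding) (c := 0) (by simp)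
  simp only [card_map, card_image_of_injOn hf, zero_add, sum_map, Nat.castEmbedding_apply,
    sum_image hf] at h
  rw [Nat.choose_two_right, ← sum_range_id]
  zify
  exact h

section DoubleCounting

variable {α ι : Type*} [DecidableEq α] [Fintype ι] [LinearOrder ι]

theorem sum_card_inter_eq_sum_choose [Fintype α] (T : ι → Finset α) :
    ∑ p ∈ univ.filter (fun p : ι × ι => p.1 < p.2), #(T p.1 ∩ T p.2) =
      ∑ e, (#{i | e ∈ T i}).choose 2 := by
  have hinter : ∀ a b, #(T a ∩ T b) = ∑ e, if e ∈ T a ∧ e ∈ T b then 1 else 0 := by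
    intro a b
    rw [← card_filter]
    congr 1
    ext e
    simp
  simp_rw [hinter]
  rw [sum_comm]
  refine sum_congr rfl fun e _ => ?_
  rw [← card_filter, ← card_product_filter_lt]
  congr 1
  ext p
  simp [and_comm]

theorem sum_choose_le_sum_weight [Fintype α] {κ : Type*} [DecidableEq κ]
    (S : ι → Finset (α × κ)) (hS : Pairwise (Disjoint on S)) {w : κ → ℕ}
    (hw : Injective w) :
    ∑ e, (#{i | e ∈ (S i).image Prod.fst}).choose 2 ≤ ∑ i, ∑ x ∈ S i, w x.2 := by
  set U := univ.biUnion S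
  rw [← sum_biUnion fun i _ j _ hij => hS hij, ← sum_fiberwise U Prod.fst]
  refine sum_le_sum fun e _ => ?_
  have hcard : #{i | e ∈ (S i).image Prod.fst} ≤ #{x ∈ U | x.1 = e} := by
    refine card_le_card_of_forall_subsingleton (fun i x => x ∈ S i) (fun i hi => ?_)
      (fun x _ i hi j hj => ?_)
    · obtain ⟨x, hx, rfl⟩ := mem_image.1 (mem_filter.1 hi).2
      exact ⟨x, mem_filter.2 ⟨mem_biUnion.2 ⟨i, mem_univ i, hx⟩, rfl⟩, hx⟩
    · by_contra hij
      exact disjoint_left.1 (hS hij) hi.2 hj.2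
  refine (Nat.choose_le_choose 2 hcard).trans (choose_card_two_le_sum fun x hx y hy hxy => ?_)
  exact Prod.ext ((mem_filter.1 hx).2.trans (mem_filter.1 hy).2.symm) (hw hxy)

def countBefore (T : ι → Finset α) (e : α) (i : ι) : ℕ := #{j | j < i ∧ e ∈ T j}

variable (T : ι → Finset α)

theorem countBefore_lt_card (e : α) (i : ι) : countBefore T e i < Fintype.card ι :=
  card_lt_card <| filter_ssubset.2 ⟨i, mem_univ i, fun h => lt_irrefl i h.1⟩

theorem countBefore_lt_countBefore {e : α} {i j : ι} (hij : i < j) (he : e ∈ T i) :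
    countBefore T e i < countBefore T e j := by
  refine card_lt_card <| (ssubset_iff_of_subset fun l hl => ?_).2 ⟨i, ?_, ?_⟩
  · simp only [mem_filter, mem_univ, true_and] at hl ⊢
    exact ⟨hl.1.trans hij, hl.2⟩
  · simpa using ⟨hij, he⟩
  · simp

theorem sum_sum_countBefore :
    ∑ i, ∑ e ∈ T i, countBefore T e i =
      ∑ p ∈ univ.filter (fun p : ι × ι => p.1 < p.2), #(T p.1 ∩ T p.2) := by
  have hrow : ∀ i, ∑ e ∈ T i, countBefore T e i = ∑ j, if j < i then #(T j ∩ T i) else 0 := by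
    intro i
    simp_rw [countBefore, card_filter]
    rw [sum_comm]
    refine sum_congr rfl fun j _ => ?_
    by_cases hj : j < i
    · simp only [hj, true_and, if_true, ← card_filter, filter_mem_eq_inter, inter_comm]
    · simp [hj]
  rw [sum_congr rfl fun i _ => hrow i, sum_comm, sum_filter, ← univ_product_univ, sum_product]

end DoubleCounting

section Copies

variable {α : Type*} [DecidableEq α] {r : ℕ}

def copyAssignment (T : Fin r → Finset α) (i : Fin r) : Finset (α × Fin r) :=
  (T i).image fun e => (e, ⟨countBefore T e i, by simpa using countBefore_lt_card T e i⟩)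

variable (T : Fin r → Finset α)

theorem pairwise_disjoint_copyAssignment : Pairwise (Disjoint on copyAssignment T) := by
  intro i j hij
  refine disjoint_left.2 fun x hi hj => ?_
  obtain ⟨e, he, rfl⟩ := mem_image.1 hi
  obtain ⟨e', he', hx⟩ := mem_image.1 hj
  obtain ⟨rfl, hcount⟩ := Prod.mk.inj hx
  replace hcount : countBefore T e' j = countBefore T e' i := Fin.val_eq_of_eq hcount
  rcases hij.lt_or_gt with h | h
  · exact (countBefore_lt_countBefore T h he).ne' hcount
  · exact (countBefore_lt_countBefore T h he').ne hcount

theorem sum_weight_copyAssignment :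
    ∑ i, ∑ x ∈ copyAssignment T i, (x.2 : ℕ) =
      ∑ p ∈ univ.filter (fun p : Fin r × Fin r => p.1 < p.2), #(T p.1 ∩ T p.2) := by
  rw [← sum_sum_countBefore]
  exact sum_congr rfl fun i _ => sum_image fun x _ y _ hxy => congrArg Prod.fst hxy

end Copies

theorem IsSpanningTreeEdgeSet.isSpanningTreeOfCopies_image {V : Type*} [Fintype V]
    [DecidableEq V] {G : SimpleGraph V} {T : Finset (Sym2 V)} (hT : IsSpanningTreeEdgeSet G T)
    {r : ℕ} (c : Sym2 V → Fin r) : IsSpanningTreeOfCopies G r (T.image fun e => (e, c e)) := by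
  refine ⟨fun e j j' hj hj' => ?_, ?_⟩
  · obtain ⟨_, _, h⟩ := mem_image.1 hj
    obtain ⟨_, _, h'⟩ := mem_image.1 hj'
    simp only [Prod.ext_iff] at h h'
    rw [← h.2, ← h'.2, h.1, h'.1]
  · rwa [image_image, comp_def, image_id']

theorem stmt8_general {V : Type*} [Fintype V] [DecidableEq V] (G : SimpleGraph V)
    (r k : ℕ) :
    (∃ T : Fin r → Finset (Sym2 V),
        (∀ i, IsSpanningTreeEdgeSet G (T i)) ∧
        (∑ p ∈ Finset.univ.filter (fun p : Fin r × Fin r => p.1 < p.2),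
            (T p.1 ∩ T p.2).card) ≤ k) ↔
    (∃ S : Fin r → Finset (Sym2 V × Fin r),
        (∀ i, IsSpanningTreeOfCopies G r (S i)) ∧
        (∀ i j, i ≠ j → Disjoint (S i) (S j)) ∧
        (∑ i : Fin r, ∑ x ∈ S i, (x.2 : ℕ)) ≤ k) := by
  constructor
  · rintro ⟨T, hT, hk⟩
    refine ⟨copyAssignment T, fun i => (hT i).isSpanningTreeOfCopies_image _,
      fun i j hij => pairwise_disjoint_copyAssignment T hij, ?_⟩
    rwa [sum_weight_copyAssignment]
  · rintro ⟨S, hS, hdisj, hk⟩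
    refine ⟨fun i => (S i).image Prod.fst, fun i => (hS i).2, ?_⟩
    rw [sum_card_inter_eq_sum_choose fun i => (S i).image Prod.fst]
    exact (sum_choose_le_sum_weight S (fun i j => hdisj i j) Fin.val_injective).trans hk

/-- `G` has `r` spanning trees with `∑_{i<j} |E(T_i) ∩ E(T_j)| ≤ k`
iff the multigraph `G'` (each edge replaced by `r` parallel copies `e_1,…,e_r`
with weight `w(e_i) = i - 1`, modeled by copies `(e, j)` of weight `j`) has
`r` pairwise edge-disjoint spanning trees of total weight at most `k`. -/
theorem stmt8 {V : Type*} [Fintype V] [DecidableEq V] (G : SimpleGraph V)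
    (hG : G.Connected) (r k : ℕ) :
    (∃ T : Fin r → Finset (Sym2 V),
        (∀ i, IsSpanningTreeEdgeSet G (T i)) ∧
        (∑ p ∈ Finset.univ.filter (fun p : Fin r × Fin r => p.1 < p.2),
            (T p.1 ∩ T p.2).card) ≤ k) ↔
    (∃ S : Fin r → Finset (Sym2 V × Fin r),
        (∀ i, IsSpanningTreeOfCopies G r (S i)) ∧
        (∀ i j, i ≠ j → Disjoint (S i) (S j)) ∧
        (∑ i : Fin r, ∑ x ∈ S i, (x.2 : ℕ)) ≤ k) :=
  stmt8_general G r k
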